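/- Let Ω be a nonempty open proper subset of ℝⁿ. Then there exists a countable family of closed cubes {Q_k} with sides parallel to the axes such that: (i) Ω is the union of the Q_k; (ii) the interiors of the Q_k are pairwise disjoint; (iii) for each k, diam(Q_k) ≤ dist(Q_k, ∂Ω) ≤ 4·diam(Q_k). -/

import Mathlib

/-- A closed cube in `ℝⁿ` with sides parallel to the coordinate axes. -/
def IsClosedCube {n : ℕ} (Q : Set (EuclideanSpace ℝ (Fin n))) : Prop :=
  ∃ (c : EuclideanSpace ℝ (Fin n)) (l : ℝ), 0 < l ∧
    Q = {x | ∀ i, |x i - c i| ≤ l / 2}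

/-- The distance between two sets. -/
noncomputable def setDist {X : Type*} [PseudoMetricSpace X] (E F : Set X) : ℝ :=
  sInf ((fun p : X × X => dist p.1 p.2) '' (E ×ˢ F))

namespace WhitneyAux

open Metric Set

/-- Center of a dyadic cube. -/
noncomputable def ctr (n : ℕ) (k : ℤ) (z : Fin n → ℤ) : EuclideanSpace ℝ (Fin n) :=
  WithLp.toLp 2 (fun i => ((z i : ℝ) + 1/2) * (2:ℝ)^(-k))

/-- Closed dyadic cube of generation `k` at position `z`. -/
def cube (n : ℕ) (k : ℤ) (z : Fin n → ℤ) : Set (EuclideanSpace ℝ (Fin n)) :=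
  {x | ∀ i, |x i - ctr n k z i| ≤ (2:ℝ)^(-k) / 2}

lemma isClosedCube_cube (n : ℕ) (k : ℤ) (z : Fin n → ℤ) : IsClosedCube (cube n k z) :=
  ⟨ctr n k z, (2:ℝ)^(-k), zpow_pos two_pos _, rfl⟩

lemma mem_cube {n : ℕ} {k : ℤ} {z : Fin n → ℤ} {x : EuclideanSpace ℝ (Fin n)} :
    x ∈ cube n k z ↔ ∀ i, (z i : ℝ) * (2:ℝ)^(-k) ≤ x i ∧ x i ≤ ((z i : ℝ) + 1) * (2:ℝ)^(-k) := by
  have h2 : (0:ℝ) < (2:ℝ)^(-k) := zpow_pos two_pos _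
  unfold cube ctr
  simp only [WithLp.ofLp_toLp]
  constructor
  · intro h i
    have := abs_le.1 (h i)
    constructor <;> nlinarith [this.1, this.2]
  · intro h i
    have := h i
    rw [abs_le]
    constructor <;> nlinarith [this.1, this.2]

/-- The dyadic coordinates of a point at generation `k`. -/
noncomputable def flz (n : ℕ) (k : ℤ) (x : EuclideanSpace ℝ (Fin n)) : Fin n → ℤ :=
  fun i => ⌊(2:ℝ)^k * x i⌋

lemma self_mem_aux (n : ℕ) (k : ℤ) (x : EuclideanSpace ℝ (Fin n)) (i : Fin n) :
    ((flz n k x i : ℝ)) * (2:ℝ)^(-k) ≤ x i ∧ x i ≤ ((flz n k x i : ℝ) + 1) * (2:ℝ)^(-k) := by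
  have h2 : (0:ℝ) < (2:ℝ)^k := zpow_pos two_pos _
  have hinv : (2:ℝ)^(-k) = ((2:ℝ)^k)⁻¹ := by rw [zpow_neg]
  have h1 : (flz n k x i : ℝ) ≤ (2:ℝ)^k * x i := Int.floor_le _
  have h3 : (2:ℝ)^k * x i < (flz n k x i : ℝ) + 1 := Int.lt_floor_add_one _
  rw [hinv]
  constructor
  · rw [mul_inv_le_iff₀ h2, mul_comm]; exact h1
  · rw [le_mul_inv_iff₀ h2, mul_comm]; linarith

lemma self_mem (n : ℕ) (k : ℤ) (x : EuclideanSpace ℝ (Fin n)) :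
    x ∈ cube n k (flz n k x) := mem_cube.2 (self_mem_aux n k x)

lemma floor_scale (m : ℕ) (hm : 0 < m) (t : ℝ) :
    (m : ℤ) * ⌊t⌋ ≤ ⌊(m : ℝ) * t⌋ ∧ ⌊(m:ℝ) * t⌋ + 1 ≤ (m:ℤ) * (⌊t⌋ + 1) := by
  have hm' : (0:ℝ) < m := by exact_mod_cast hm
  constructor
  · apply Int.le_floor.2
    push_cast
    nlinarith [Int.floor_le t]
  · have : ⌊(m:ℝ)*t⌋ < (m:ℤ) * (⌊t⌋+1) := by
      apply Int.floor_lt.2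
      push_cast
      nlinarith [Int.lt_floor_add_one t]
    omega

lemma nest (n : ℕ) (k k' : ℤ) (hkk : k ≤ k') (x : EuclideanSpace ℝ (Fin n)) (i : Fin n) :
    (flz n k x i : ℝ) * (2:ℝ)^(-k) ≤ (flz n k' x i : ℝ) * (2:ℝ)^(-k') ∧
    ((flz n k' x i : ℝ) + 1) * (2:ℝ)^(-k') ≤ ((flz n k x i : ℝ) + 1) * (2:ℝ)^(-k) := by
  set m : ℕ := 2 ^ (k' - k).toNat with hmdef
  have hm : 0 < m := Nat.pow_pos (by norm_num)
  have hmr : (m : ℝ) = (2:ℝ) ^ (k' - k) := by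
    rw [hmdef]
    push_cast
    rw [← zpow_natCast (2:ℝ), Int.toNat_of_nonneg (by omega)]
  have ht : (2:ℝ)^k' * x i = (m:ℝ) * ((2:ℝ)^k * x i) := by
    rw [hmr, ← mul_assoc, ← zpow_add₀ (two_ne_zero) (k'-k) k]
    ring_nf
  have hf : flz n k' x i = ⌊(m:ℝ) * ((2:ℝ)^k * x i)⌋ := by
    unfold flz; rw [ht]
  obtain ⟨hlo, hhi⟩ := floor_scale m hm ((2:ℝ)^k * x i)
  rw [← hf] at hlo hhi
  have hlo' : (m:ℝ) * (flz n k x i : ℝ) ≤ (flz n k' x i : ℝ) := by exact_mod_cast hlo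
  have hhi' : (flz n k' x i : ℝ) + 1 ≤ (m:ℝ) * ((flz n k x i : ℝ) + 1) := by exact_mod_cast hhi
  have hsplit : (2:ℝ)^(-k) = (m:ℝ) * (2:ℝ)^(-k') := by
    rw [hmr, ← zpow_add₀ (two_ne_zero : (2:ℝ) ≠ 0)]
    ring_nf
  have hp : (0:ℝ) < (2:ℝ)^(-k') := zpow_pos two_pos _
  constructor
  · rw [hsplit]; nlinarith
  · rw [hsplit]; nlinarith

lemma cube_nest (n : ℕ) {k k' : ℤ} (hkk : k ≤ k') (x : EuclideanSpace ℝ (Fin n)) :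
    cube n k' (flz n k' x) ⊆ cube n k (flz n k x) := by
  intro y hy
  rw [mem_cube] at hy ⊢
  intro i
  obtain ⟨h1, h2⟩ := nest n k k' hkk x i
  exact ⟨le_trans h1 (hy i).1, le_trans (hy i).2 h2⟩

lemma dist_le_in_cube {n : ℕ} {k : ℤ} {z : Fin n → ℤ} {x y : EuclideanSpace ℝ (Fin n)}
    (hx : x ∈ cube n k z) (hy : y ∈ cube n k z) :
    dist x y ≤ Real.sqrt n * (2:ℝ)^(-k) := by
  have h2 : (0:ℝ) < (2:ℝ)^(-k) := zpow_pos two_pos _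
  have hcomp : ∀ i, dist (x i) (y i) ≤ (2:ℝ)^(-k) := by
    intro i
    have hx' := mem_cube.1 hx i
    have hy' := mem_cube.1 hy i
    rw [Real.dist_eq, abs_le]
    constructor <;> nlinarith [hx'.1, hx'.2, hy'.1, hy'.2]
  rw [EuclideanSpace.dist_eq]
  have hsum : ∑ i, dist (x i) (y i) ^ 2 ≤ (n : ℝ) * ((2:ℝ)^(-k))^2 := by
    calc ∑ i, dist (x i) (y i) ^ 2 ≤ ∑ _i : Fin n, ((2:ℝ)^(-k))^2 :=
          Finset.sum_le_sum (fun i _ => by nlinarith [hcomp i, dist_nonneg (x := x i) (y := y i)])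
      _ = (n : ℝ) * ((2:ℝ)^(-k))^2 := by simp [Finset.card_univ]
  calc Real.sqrt (∑ i, dist (x i) (y i) ^ 2) ≤ Real.sqrt ((n:ℝ) * ((2:ℝ)^(-k))^2) :=
        Real.sqrt_le_sqrt hsum
    _ = Real.sqrt n * (2:ℝ)^(-k) := by
        rw [Real.sqrt_mul (by positivity), Real.sqrt_sq (le_of_lt h2)]

lemma isBounded_cube {n : ℕ} (k : ℤ) (z : Fin n → ℤ) : Bornology.IsBounded (cube n k z) :=
  Metric.isBounded_iff.2 ⟨Real.sqrt n * (2:ℝ)^(-k), fun _ hx _ hy => dist_le_in_cube hx hy⟩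

lemma diam_cube {n : ℕ} (k : ℤ) (z : Fin n → ℤ) :
    Metric.diam (cube n k z) = Real.sqrt n * (2:ℝ)^(-k) := by
  have h2 : (0:ℝ) < (2:ℝ)^(-k) := zpow_pos two_pos _
  apply le_antisymm
  · exact Metric.diam_le_of_forall_dist_le (by positivity) (fun _ hx _ hy => dist_le_in_cube hx hy)
  · set a : EuclideanSpace ℝ (Fin n) := WithLp.toLp 2 (fun i => (z i : ℝ) * (2:ℝ)^(-k)) with ha
    set b : EuclideanSpace ℝ (Fin n) := WithLp.toLp 2 (fun i => ((z i : ℝ) + 1) * (2:ℝ)^(-k)) with hb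
    have hma : a ∈ cube n k z := mem_cube.2 (fun i => by rw [ha]; simp only [WithLp.ofLp_toLp]; constructor <;> nlinarith)
    have hmb : b ∈ cube n k z := mem_cube.2 (fun i => by rw [hb]; simp only [WithLp.ofLp_toLp]; constructor <;> nlinarith)
    have : dist a b = Real.sqrt n * (2:ℝ)^(-k) := by
      rw [EuclideanSpace.dist_eq]
      have : ∀ i : Fin n, dist (a i) (b i) ^ 2 = ((2:ℝ)^(-k))^2 := by
        intro i
        simp only [ha, hb, WithLp.ofLp_toLp]
        rw [Real.dist_eq]
        rw [show (z i : ℝ) * (2:ℝ)^(-k) - ((z i : ℝ)+1) * (2:ℝ)^(-k) = -((2:ℝ)^(-k)) by ring]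
        rw [abs_neg, abs_of_pos h2]
      rw [Finset.sum_congr rfl (fun i _ => this i)]
      simp only [Finset.sum_const, Finset.card_univ, Fintype.card_fin, nsmul_eq_mul]
      rw [Real.sqrt_mul (by positivity), Real.sqrt_sq (le_of_lt h2)]
    rw [← this]
    exact Metric.dist_le_diam_of_mem (isBounded_cube k z) hma hmb

lemma interior_pin {n : ℕ} {k : ℤ} {z : Fin n → ℤ} {w : EuclideanSpace ℝ (Fin n)}
    (hw : w ∈ interior (cube n k z)) : flz n k w = z := by
  have h2 : (0:ℝ) < (2:ℝ)^(-k) := zpow_pos two_pos _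
  have h2' : (0:ℝ) < (2:ℝ)^k := zpow_pos two_pos _
  have hmul : (2:ℝ)^k * (2:ℝ)^(-k) = 1 := by
    rw [← zpow_add₀ (two_ne_zero : (2:ℝ) ≠ 0)]; simp
  obtain ⟨ε, hε, hball⟩ := Metric.isOpen_iff.1 isOpen_interior w hw
  funext i
  have hwk := mem_cube.1 (interior_subset hw) i
  have hup : w i + ε/2 ≤ ((z i : ℝ) + 1) * (2:ℝ)^(-k) := by
    have hy : (w + (ε/2) • EuclideanSpace.single i (1:ℝ)) ∈ cube n k z := by
      apply interior_subset
      apply hball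
      rw [Metric.mem_ball, dist_self_add_left, norm_smul, EuclideanSpace.norm_single]
      simp only [norm_one, mul_one, Real.norm_eq_abs]
      rw [abs_of_pos (by linarith)]
      linarith
    have := (mem_cube.1 hy i).2
    simpa [EuclideanSpace.single_apply] using this
  show ⌊(2:ℝ)^k * w i⌋ = z i
  rw [Int.floor_eq_iff]
  constructor
  · calc ((z i : ℝ)) = (z i : ℝ) * (2:ℝ)^(-k) * (2:ℝ)^k := by
          rw [mul_assoc, mul_comm ((2:ℝ)^(-k)), hmul, mul_one]
      _ ≤ w i * (2:ℝ)^k := by nlinarith [hwk.1]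
      _ = (2:ℝ)^k * w i := mul_comm _ _
  · have : w i < ((z i : ℝ) + 1) * (2:ℝ)^(-k) := by linarith
    calc (2:ℝ)^k * w i < (2:ℝ)^k * (((z i : ℝ) + 1) * (2:ℝ)^(-k)) := by nlinarith
      _ = (z i : ℝ) + 1 := by rw [← mul_assoc, mul_comm ((2:ℝ)^k), mul_assoc, hmul]; ring

lemma int_lt_two_zpow (m : ℤ) : (m : ℝ) < (2:ℝ) ^ m := by
  rcases le_or_gt m 0 with hm | hm
  · calc (m:ℝ) ≤ 0 := by exact_mod_cast hm
      _ < (2:ℝ)^m := zpow_pos two_pos _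
  · have h1 : m = (m.toNat : ℤ) := (Int.toNat_of_nonneg hm.le).symm
    have h2 : (m.toNat : ℕ) < 2 ^ (m.toNat : ℕ) := Nat.lt_two_pow_self
    have h3 : ((m.toNat : ℕ) : ℝ) < ((2:ℝ)) ^ (m.toNat : ℕ) := by exact_mod_cast h2
    calc (m : ℝ) = ((m.toNat : ℕ) : ℝ) := by exact_mod_cast h1
      _ < (2:ℝ) ^ (m.toNat : ℕ) := h3
      _ = (2:ℝ) ^ m := by rw [← zpow_natCast (2:ℝ), ← h1]

end WhitneyAux

open Metric Set WhitneyAux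

/-- Whitney decomposition of a nonempty proper open subset of `ℝⁿ`. -/
theorem whitney_decomposition (n : ℕ) (Ω : Set (EuclideanSpace ℝ (Fin n)))
    (hopen : IsOpen Ω) (hne : Ω.Nonempty) (hproper : Ω ≠ Set.univ) :
    ∃ Q : ℕ → Set (EuclideanSpace ℝ (Fin n)),
      (∀ k, IsClosedCube (Q k)) ∧
      (⋃ k, Q k) = Ω ∧
      (Pairwise fun i j => Disjoint (interior (Q i)) (interior (Q j))) ∧
      (∀ k, Metric.diam (Q k) ≤ setDist (Q k) (frontier Ω) ∧
            setDist (Q k) (frontier Ω) ≤ 4 * Metric.diam (Q k)) := by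
  classical
  -- dispatch the degenerate case `n = 0`
  rcases Nat.eq_zero_or_pos n with hn0 | hn
  · subst hn0
    exfalso
    obtain ⟨x, hx⟩ := hne
    apply hproper
    ext y
    simp only [Set.mem_univ, iff_true]
    have : y = x := Subsingleton.elim y x
    rwa [this]
  -- setup
  have hc : Ωᶜ.Nonempty := Set.nonempty_compl.2 hproper
  have hn1 : (1:ℝ) ≤ Real.sqrt n := Real.one_le_sqrt.2 (by exact_mod_cast hn)
  have hsn : (0:ℝ) < Real.sqrt n := lt_of_lt_of_le one_pos hn1
  set S : ℤ → (Fin n → ℤ) → Prop :=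
    fun k z => ∀ y ∈ cube n k z, Real.sqrt n * (2:ℝ)^(-k) ≤ Metric.infDist y Ωᶜ with hS
  -- monotonicity of `S` along the floor chain of a point
  have hSmono : ∀ (k k' : ℤ), k ≤ k' → ∀ x, S k (flz n k x) → S k' (flz n k' x) := by
    intro k k' hkk x h y hy
    have h1 : (2:ℝ)^(-k') ≤ (2:ℝ)^(-k) :=
      zpow_le_zpow_right₀ one_le_two (by omega)
    calc Real.sqrt n * (2:ℝ)^(-k') ≤ Real.sqrt n * (2:ℝ)^(-k) := by nlinarith
      _ ≤ Metric.infDist y Ωᶜ := h y (cube_nest n hkk x hy)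
  -- every `S`-cube is inside `Ω`
  have hsub : ∀ (k : ℤ) (z : Fin n → ℤ), S k z → cube n k z ⊆ Ω := by
    intro k z hSz y hy
    have h1 : 0 < Metric.infDist y Ωᶜ :=
      lt_of_lt_of_le (by positivity) (hSz y hy)
    by_contra hyΩ
    have h0 : Metric.infDist y Ωᶜ = 0 := Metric.infDist_zero_of_mem hyΩ
    rw [h0] at h1
    exact lt_irrefl _ h1
  -- existence of a least generation for each point of `Ω`
  have hW : ∀ x ∈ Ω, ∃ k : ℤ, (S k (flz n k x) ∧ ∀ k', S k' (flz n k' x) → k ≤ k') := by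
    intro x hx
    have hBdd : ∃ b : ℤ, ∀ k : ℤ, S k (flz n k x) → b ≤ k := by
      refine ⟨-⌈Metric.infDist x Ωᶜ⌉, fun k hk => ?_⟩
      have h1 : Real.sqrt n * (2:ℝ)^(-k) ≤ Metric.infDist x Ωᶜ := hk x (self_mem n k x)
      have h2 : (0:ℝ) < (2:ℝ)^(-k) := zpow_pos two_pos _
      have h3 : (2:ℝ)^(-k) ≤ Metric.infDist x Ωᶜ := by nlinarith
      have h4 : ((-k : ℤ) : ℝ) < Metric.infDist x Ωᶜ :=
        lt_of_lt_of_le (by exact_mod_cast int_lt_two_zpow (-k)) h3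
      have h5 : ((-k : ℤ) : ℝ) < (⌈Metric.infDist x Ωᶜ⌉ : ℝ) :=
        lt_of_lt_of_le h4 (Int.le_ceil _)
      have h6 : -k < ⌈Metric.infDist x Ωᶜ⌉ := by exact_mod_cast h5
      omega
    have hNe : ∃ k : ℤ, S k (flz n k x) := by
      obtain ⟨ε, hε, hball⟩ := Metric.isOpen_iff.1 hopen x hx
      have hdx : ε ≤ Metric.infDist x Ωᶜ := by
        by_contra hlt
        push_neg at hlt
        obtain ⟨y, hyc, hyd⟩ := (Metric.infDist_lt_iff hc).1 hlt
        exact hyc (hball (Metric.mem_ball'.2 hyd))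
      obtain ⟨m, hm⟩ := exists_pow_lt_of_lt_one
        (show (0:ℝ) < ε / (2 * (Real.sqrt n + 1)) by positivity)
        (show (1/2 : ℝ) < 1 by norm_num)
      refine ⟨(m : ℤ), ?_⟩
      have hpow : (2:ℝ)^(-(m:ℤ)) = (1/2:ℝ)^m := by
        rw [zpow_neg, zpow_natCast, one_div, inv_pow]
      intro y hy
      have hd : dist x y ≤ Real.sqrt n * (2:ℝ)^(-(m:ℤ)) :=
        dist_le_in_cube (self_mem n (m:ℤ) x) hy
      have hkey : Metric.infDist x Ωᶜ ≤ Metric.infDist y Ωᶜ + dist x y :=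
        Metric.infDist_le_infDist_add_dist
      have hsmall : (2:ℝ)^(-(m:ℤ)) < ε / (2 * (Real.sqrt n + 1)) := by rw [hpow]; exact hm
      have h2 : (0:ℝ) < (2:ℝ)^(-(m:ℤ)) := zpow_pos two_pos _
      have hsmall2 : (2:ℝ)^(-(m:ℤ)) * (2 * (Real.sqrt n + 1)) < ε :=
        (lt_div_iff₀ (by positivity : (0:ℝ) < 2 * (Real.sqrt n + 1))).1 hsmall
      nlinarith [mul_pos hsn h2]
    obtain ⟨lb, hlb1, hlb2⟩ := Int.exists_least_of_bdd hBdd hNe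
    exact ⟨lb, hlb1, hlb2⟩
  choose! f hf1 hf2 using hW
  -- the Whitney family
  set M : Set (ℤ × (Fin n → ℤ)) := {p | ∃ x ∈ Ω, p = (f x, flz n (f x) x)} with hM
  have hMS : ∀ p ∈ M, S p.1 p.2 := by
    rintro p ⟨x, hx, rfl⟩
    exact hf1 x hx
  have hMsub : ∀ p ∈ M, cube n p.1 p.2 ⊆ Ω := fun p hp => hsub _ _ (hMS p hp)
  have hMcover : ∀ x ∈ Ω, ∃ p ∈ M, x ∈ cube n p.1 p.2 := by
    intro x hx
    exact ⟨(f x, flz n (f x) x), ⟨x, hx, rfl⟩, self_mem n (f x) x⟩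
  -- disjointness of interiors
  have hMdisj : ∀ p ∈ M, ∀ q ∈ M, p ≠ q →
      Disjoint (interior (cube n p.1 p.2)) (interior (cube n q.1 q.2)) := by
    have key : ∀ p ∈ M, ∀ q ∈ M, p.1 ≤ q.1 → p ≠ q →
        Disjoint (interior (cube n p.1 p.2)) (interior (cube n q.1 q.2)) := by
      rintro p hp q hq hle hne'
      rw [Set.disjoint_left]
      intro w hwp hwq
      obtain ⟨y, hy, rfl⟩ := hq
      dsimp only at hle hwq
      have hzp : flz n p.1 w = p.2 := interior_pin hwp
      have hzq : flz n (f y) w = flz n (f y) y := interior_pin hwq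
      rcases eq_or_lt_of_le hle with heq | hlt
      · -- same generation : same cube
        apply hne'
        have : p.2 = flz n (f y) y := by rw [← hzq, ← heq, hzp]
        exact Prod.ext heq this
      · -- `p.1 < f y` : contradiction with minimality of `f y`
        have hS1 : S p.1 (flz n p.1 w) := by rw [hzp]; exact hMS p hp
        have hS2 : S (f y - 1) (flz n (f y - 1) w) := hSmono _ _ (by omega) w hS1
        -- identify `flz n (f y - 1) w` with `flz n (f y - 1) y`
        have hwq' : w ∈ interior (cube n (f y - 1) (flz n (f y - 1) y)) :=
          interior_mono (cube_nest n (show f y - 1 ≤ f y by omega) y) hwq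
        have hzq2 : flz n (f y - 1) w = flz n (f y - 1) y := interior_pin hwq'
        rw [hzq2] at hS2
        have := hf2 y hy _ hS2
        omega
    intro p hp q hq hne'
    rcases le_total p.1 q.1 with h | h
    · exact key p hp q hq h hne'
    · exact (key q hq p hp h (Ne.symm hne')).symm
  -- `M` is infinite
  have hMinf : M.Infinite := by
    intro hfin
    have hcl : IsClosed (⋃ p ∈ M, cube n p.1 p.2) := by
      apply hfin.isClosed_biUnion
      intro p _
      have : cube n p.1 p.2 = ⋂ i, {x : EuclideanSpace ℝ (Fin n) |
          |x i - ctr n p.1 p.2 i| ≤ (2:ℝ)^(-p.1) / 2} := by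
        ext x; simp [cube, Set.mem_iInter]
      rw [this]
      apply isClosed_iInter
      intro i
      have hcont : Continuous fun x : EuclideanSpace ℝ (Fin n) => x i :=
        (EuclideanSpace.proj (𝕜 := ℝ) (i : Fin n)).continuous
      exact isClosed_le ((hcont.sub continuous_const).abs) continuous_const
    have hunion : (⋃ p ∈ M, cube n p.1 p.2) = Ω := by
      apply Set.Subset.antisymm
      · exact Set.iUnion₂_subset hMsub
      · intro x hx
        obtain ⟨p, hp, hxp⟩ := hMcover x hx
        exact Set.mem_biUnion hp hxp
    rw [hunion] at hcl
    have : Ω = Set.univ := by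
      rcases isClopen_iff.1 ⟨hcl, hopen⟩ with h | h
      · exact absurd h (Set.nonempty_iff_ne_empty.1 hne)
      · exact h
    exact hproper this
  have hMcount : M.Countable := Set.to_countable M
  haveI : Countable ↥M := hMcount.to_subtype
  haveI : Infinite ↥M := hMinf.to_subtype
  obtain ⟨D⟩ := nonempty_denumerable ↥M
  set g : ℕ → ↥M := fun k => (Denumerable.eqv ↥M).symm k with hg
  refine ⟨fun k => cube n ((g k : ℤ × (Fin n → ℤ))).1 ((g k : ℤ × (Fin n → ℤ))).2, ?_, ?_, ?_, ?_⟩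
  · intro k; exact isClosedCube_cube n _ _
  · apply Set.Subset.antisymm
    · apply Set.iUnion_subset
      intro k
      exact hMsub _ (g k).2
    · intro x hx
      obtain ⟨p, hp, hxp⟩ := hMcover x hx
      refine Set.mem_iUnion.2 ⟨Denumerable.eqv ↥M ⟨p, hp⟩, ?_⟩
      have : g (Denumerable.eqv ↥M ⟨p, hp⟩) = ⟨p, hp⟩ := (Denumerable.eqv ↥M).symm_apply_apply _
      rw [this]
      exact hxp
  · intro i j hij
    apply hMdisj _ (g i).2 _ (g j).2
    intro hEq
    apply hij
    have : g i = g j := Subtype.ext hEq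
    have := congrArg (Denumerable.eqv ↥M) this
    simpa [hg] using this
  · intro k
    obtain ⟨x, hx, hpx⟩ := (g k).2
    set p : ℤ × (Fin n → ℤ) := ((g k : ℤ × (Fin n → ℤ))) with hpdef
    have hpS : S p.1 p.2 := hMS p (g k).2
    have h2 : (0:ℝ) < (2:ℝ)^(-p.1) := zpow_pos two_pos _
    -- frontier point realizing the distance from x
    have hxmem : x ∈ cube n p.1 p.2 := by
      rw [hpx]; exact self_mem n (f x) x
    obtain ⟨y0, hy0f, hy0d⟩ := exists_mem_frontier_infDist_compl_eq_dist hx hproper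
    have hfrne : (frontier Ω).Nonempty := ⟨y0, hy0f⟩
    have hfrsub : frontier Ω ⊆ Ωᶜ := by
      intro y hy
      have := hopen.frontier_eq ▸ hy
      exact this.2
    rw [diam_cube]
    constructor
    · -- lower bound
      apply le_csInf
      · exact ⟨dist x y0, ⟨(x, y0), Set.mk_mem_prod hxmem hy0f, rfl⟩⟩
      · rintro b ⟨⟨a, y⟩, ⟨haQ, hyF⟩, rfl⟩
        calc Real.sqrt n * (2:ℝ)^(-p.1) ≤ Metric.infDist a Ωᶜ := hpS a haQ
          _ ≤ dist a y := Metric.infDist_le_dist_of_mem (hfrsub hyF)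
    · -- upper bound
      have hnotS : ¬ S (p.1 - 1) (flz n (p.1 - 1) x) := by
        intro hS'
        have := hf2 x hx _ hS'
        have hp1 : p.1 = f x := by rw [hpx]
        omega
      have hex : ∃ u ∈ cube n (p.1 - 1) (flz n (p.1 - 1) x),
          Metric.infDist u Ωᶜ < Real.sqrt n * (2:ℝ)^(-(p.1 - 1)) := by
        by_contra hcon
        push_neg at hcon
        exact hnotS hcon
      obtain ⟨u, hu, hud⟩ := hex
      have hxin : x ∈ cube n (p.1 - 1) (flz n (p.1 - 1) x) := self_mem n _ x
      have hdxu : dist x u ≤ Real.sqrt n * (2:ℝ)^(-(p.1 - 1)) := dist_le_in_cube hxin hu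
      have hdouble : (2:ℝ)^(-(p.1 - 1)) = 2 * (2:ℝ)^(-p.1) := by
        rw [show -(p.1 - 1) = (-p.1) + 1 by ring, zpow_add₀ (two_ne_zero : (2:ℝ) ≠ 0)]
        ring
      have hkey : Metric.infDist x Ωᶜ ≤ Metric.infDist u Ωᶜ + dist x u :=
        Metric.infDist_le_infDist_add_dist
      have hsd : setDist (cube n p.1 p.2) (frontier Ω) ≤ dist x y0 := by
        apply csInf_le
        · refine ⟨0, ?_⟩
          rintro b ⟨⟨a, y⟩, _, rfl⟩
          exact dist_nonneg
        · exact ⟨(x, y0), Set.mk_mem_prod hxmem hy0f, rfl⟩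
      calc setDist (cube n p.1 p.2) (frontier Ω) ≤ dist x y0 := hsd
        _ = Metric.infDist x Ωᶜ := hy0d.symm
        _ ≤ Metric.infDist u Ωᶜ + dist x u := hkey
        _ ≤ 4 * (Real.sqrt n * (2:ℝ)^(-p.1)) := by
            rw [hdouble] at hud hdxu
            nlinarith [hud, hdxu]
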